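/- arXiv:0712.1957 — 7 statements merged into one kernel-verified Lean document; each statement's English description precedes it below -/
import Mathlib

section
/- Let R be a commutative ring with identity. If −1 can be written as a sum of two squares in R, then every element of R which can be written as a (finite) sum of squares in R can be written as a sum of three squares in R. -/
/-!
Modulo `2` a sum of squares is congruent to a square `w ^ 2 ≡ 1 - (w + 1) ^ 2`, so it has the form
`2 * k + 1 - v ^ 2 = (k + 1) ^ 2 - (k ^ 2 + v ^ 2)`. Since `-1` is a sum of two squares and sums of
two squares are closed under multiplication, `-(k ^ 2 + v ^ 2)` is a sum of two squares as well.
-/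

theorem IsSumSq.exists_eq_two_mul_add_one_sub_sq {R : Type*} [CommRing R] {a : R}
    (ha : IsSumSq a) : ∃ k v : R, a = 2 * k + 1 - v ^ 2 := by
  induction ha with
  | zero => exact ⟨0, 1, by ring⟩
  | sq_add t _ ih =>
    obtain ⟨k, v, rfl⟩ := ih
    exact ⟨k + v * t + t * t, v + t, by ring⟩

theorem stmt3 (R : Type*) [CommRing R]
    (h : ∃ x y : R, x ^ 2 + y ^ 2 = -1)
    (a : R) (ha : IsSumSq a) :
    ∃ x y z : R, x ^ 2 + y ^ 2 + z ^ 2 = a := by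
  obtain ⟨x, y, hxy⟩ := h
  obtain ⟨k, v, rfl⟩ := ha.exists_eq_two_mul_add_one_sub_sq
  obtain ⟨r, s, hrs⟩ := sq_add_sq_mul hxy.symm (rfl : k ^ 2 + v ^ 2 = _)
  exact ⟨k + 1, r, s, by linear_combination -hrs⟩
end

section
/- Let p be an odd prime such that the multiplicative order of 2 modulo p is even (equivalently, there exists t ≥ 1 with 2^t ≡ −1 (mod p)). Let K = ℚ(ζ_p) be the p-th cyclotomic field with ring of integers O_K. Then −1 is a sum of two squares in O_K: there exist a, b ∈ O_K with a² + b² = −1. -/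
/-!
Let `ζ` be a primitive `p`-th root of unity and `2 ^ t ≡ -1 (mod p)`, and put `x = ζ ^ 2`, so that
`x ^ 2 ^ t = x⁻¹`. The telescoping product `∏_{i < t} (1 + x ^ 2 ^ i) = (x ^ 2 ^ t - 1) / (x - 1)`
then equals `-x⁻¹`. Each factor `1 + (ζ ^ 2 ^ i) ^ 2` is a sum of two squares, hence so is the
product (Brahmagupta–Fibonacci), say `a ^ 2 + b ^ 2`, and `-1 = (ζ a) ^ 2 + (ζ b) ^ 2`.
-/

open scoped NumberField

open Finset

theorem exists_sq_add_sq_eq_prod_sq_add_one {ι R : Type*} [CommRing R] (s : Finset ι)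
    (c : ι → R) : ∃ a b : R, a ^ 2 + b ^ 2 = ∏ i ∈ s, (c i ^ 2 + 1) :=
  prod_induction _ (fun x => ∃ a b : R, a ^ 2 + b ^ 2 = x)
    (by rintro _ _ ⟨a, b, rfl⟩ ⟨c, d, rfl⟩; exact ⟨_, _, sq_add_sq_mul_sq_add_sq.symm⟩)
    ⟨1, 0, by ring⟩ (fun i _ => ⟨c i, 1, by ring⟩)

theorem prod_range_pow_two_pow_add_one_eq_neg {R : Type*} [CommRing R] [IsDomain R] {x : R}
    {t : ℕ} (hx : x ≠ 1) (hxt : x ^ (2 ^ t + 1) = 1) :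
    ∏ i ∈ range t, (x ^ 2 ^ i + 1) = -x ^ 2 ^ t := by
  have hgeom := pow_two_pow_sub_pow_two_pow (x := x) (y := 1) t
  simp only [one_pow] at hgeom
  refine mul_right_cancel₀ (sub_ne_zero.2 hx) ?_
  linear_combination -hgeom + hxt

theorem exists_sq_add_sq_eq_neg_one_of_pow_eq_one {R : Type*} [CommRing R] [IsDomain R] {ζ : R}
    {t : ℕ} (hζ : ζ ^ 2 ≠ 1) (hζt : ζ ^ (2 ^ t + 1) = 1) : ∃ a b : R, a ^ 2 + b ^ 2 = -1 := by
  obtain ⟨a, b, hab⟩ := exists_sq_add_sq_eq_prod_sq_add_one (range t) (fun i => ζ ^ 2 ^ i)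
  have hprod := prod_range_pow_two_pow_add_one_eq_neg hζ (t := t)
    (by rw [← pow_mul, mul_comm, pow_mul, hζt, one_pow])
  simp only [← pow_mul, mul_comm _ 2] at hab hprod
  refine ⟨ζ * a, ζ * b, ?_⟩
  linear_combination ζ ^ 2 * (hab.trans hprod) - (ζ ^ (2 ^ t + 1) + 1) * hζt

theorem IsPrimitiveRoot.pow_eq_neg_one_of_two_mul {R : Type*} [CommRing R] [NoZeroDivisors R]
    {ζ : R} {r : ℕ} (h : IsPrimitiveRoot ζ (2 * r)) (hr : 0 < r) : ζ ^ r = -1 :=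
  (h.pow (by omega) (mul_comm 2 r)).eq_neg_one_of_two_right

theorem ZMod.exists_dvd_pow_add_one_of_even_orderOf {p : ℕ} [Fact p.Prime] {a : ℕ}
    (ha : (a : ZMod p) ≠ 0) (hord : Even (orderOf (a : ZMod p))) : ∃ r, p ∣ a ^ r + 1 := by
  obtain ⟨r, hr⟩ := hord
  have hpos : 0 < orderOf (a : ZMod p) :=
    Nat.pos_of_dvd_of_pos (ZMod.orderOf_dvd_card_sub_one ha)
      (Nat.sub_pos_of_lt (Fact.out : p.Prime).one_lt)
  have hprim : IsPrimitiveRoot (a : ZMod p) (2 * r) := two_mul r ▸ hr ▸ .orderOf _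
  refine ⟨r, (ZMod.natCast_eq_zero_iff _ p).1 ?_⟩
  rw [Nat.cast_add, Nat.cast_pow, hprim.pow_eq_neg_one_of_two_mul (by omega), Nat.cast_one,
    neg_add_cancel]

theorem stmt5 (p : ℕ+) (hp : (p : ℕ).Prime) (hodd : (p : ℕ) ≠ 2)
    (hord : Even (orderOf (2 : ZMod p)))
    (K : Type*) [Field K] [NumberField K] [IsCyclotomicExtension {(p : ℕ)} ℚ K] :
    ∃ a b : 𝓞 K, a ^ 2 + b ^ 2 = -1 := by
  have : Fact (p : ℕ).Prime := ⟨hp⟩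
  have hp2 : 2 < (p : ℕ) := lt_of_le_of_ne hp.two_le (Ne.symm hodd)
  have h2 : ((2 : ℕ) : ZMod p) ≠ 0 := by
    rw [Ne, ZMod.natCast_eq_zero_iff, Nat.prime_dvd_prime_iff_eq hp Nat.prime_two]
    exact hodd
  obtain ⟨t, ht⟩ := ZMod.exists_dvd_pow_add_one_of_even_orderOf h2 (by exact_mod_cast hord)
  have hζ := (IsCyclotomicExtension.zeta_spec p ℚ K).toInteger_isPrimitiveRoot
  exact exists_sq_add_sq_eq_neg_one_of_pow_eq_one (hζ.pow_ne_one_of_pos_of_lt two_ne_zero hp2)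
    ((hζ.pow_eq_one_iff_dvd _).2 ht)
end

section
/- Let R be an integral domain, p an odd prime, and ζ ∈ R a primitive p-th root of unity. Let t ≥ 1 be an integer with 2^t ≡ −1 (mod p). Then ζ² · ∏_{i=1}^{t} (1 + ζ^{2^i}) = −1. -/
/-! Multiplying the product by `1 - ζ²` telescopes it to `1 - ζ^(2^(t+1))`, and
`2^(t+1) ≡ -2 (mod p)` turns this into `1 - ζ⁻²`; cancelling the nonzero factor `1 - ζ²`
leaves `ζ² · ∏ = -1`. -/

open Finset

theorem one_sub_sq_mul_prod_Icc_one_add_pow_two_pow {R : Type*} [CommRing R] (x : R) (n : ℕ) :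
    (1 - x ^ 2) * ∏ i ∈ Icc 1 n, (1 + x ^ 2 ^ i) = 1 - x ^ 2 ^ (n + 1) := by
  induction n with
  | zero => simp
  | succ n ih =>
    rw [prod_Icc_succ_top (by omega), ← mul_assoc, ih, pow_succ 2 (n + 1), pow_mul]
    ring

theorem IsPrimitiveRoot.pow_eq_one_of_natCast_eq_zero {M : Type*} [CommMonoid M] {ζ : M}
    {k : ℕ} (hζ : IsPrimitiveRoot ζ k) {n : ℕ} (hn : (n : ZMod k) = 0) : ζ ^ n = 1 :=
  (hζ.pow_eq_one_iff_dvd n).mpr ((ZMod.natCast_eq_zero_iff n k).mp hn)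

theorem stmt6_general (R : Type*) [CommRing R] [IsDomain R]
    (p : ℕ) (hp : p.Prime) (hodd : p ≠ 2)
    (ζ : R) (hζ : IsPrimitiveRoot ζ p)
    (t : ℕ) (h2t : (2 : ZMod p) ^ t = -1) :
    ζ ^ 2 * ∏ i ∈ Finset.Icc 1 t, (1 + ζ ^ (2 ^ i)) = -1 := by
  have hζ_sq : 1 - ζ ^ 2 ≠ 0 :=
    sub_ne_zero.mpr (hζ.pow_ne_one_of_pos_of_lt two_ne_zero (hp.two_le.lt_of_ne' hodd)).symm
  have hcycle : ζ ^ (2 ^ (t + 1) + 2) = 1 :=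
    hζ.pow_eq_one_of_natCast_eq_zero (by push_cast; rw [pow_succ, h2t]; ring)
  apply mul_left_cancel₀ hζ_sq
  calc (1 - ζ ^ 2) * (ζ ^ 2 * ∏ i ∈ Icc 1 t, (1 + ζ ^ 2 ^ i))
      = ζ ^ 2 * (1 - ζ ^ 2 ^ (t + 1)) := by
        rw [mul_left_comm, one_sub_sq_mul_prod_Icc_one_add_pow_two_pow]
    _ = ζ ^ 2 - ζ ^ (2 ^ (t + 1) + 2) := by ring
    _ = (1 - ζ ^ 2) * -1 := by rw [hcycle]; ring

theorem stmt6 (R : Type*) [CommRing R] [IsDomain R]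
    (p : ℕ) (hp : p.Prime) (hodd : p ≠ 2)
    (ζ : R) (hζ : IsPrimitiveRoot ζ p)
    (t : ℕ) (ht : 1 ≤ t) (h2t : (2 : ZMod p) ^ t = -1) :
    ζ ^ 2 * ∏ i ∈ Finset.Icc 1 t, (1 + ζ ^ (2 ^ i)) = -1 :=
  stmt6_general R p hp hodd ζ hζ t h2t
end

section
/- Let n, m, k be positive integers. The equation m²x² + n^{2k}y² − nz² = 1 has a solution with x, y, z in the p-adic integers ℤ_p for every prime p if and only if gcd(n, m) = 1. -/
/-! If a prime `p` divides both `n` and `m`, the equation reduces modulo `p` to `0 = 1`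
(this needs `k > 0`), so it has no solution in `ℤ_[p]`. Conversely, if `gcd(n, m) = 1`
then for each `p` one of `m` and `n ^ k` is a `p`-adic unit `u`, and setting the matching
variable to `u⁻¹` and the other two to `0` solves the equation. -/

theorem PadicInt.isUnit_natCast_of_not_dvd {p : ℕ} [Fact p.Prime] {n : ℕ} (h : ¬p ∣ n) :
    IsUnit (n : ℤ_[p]) := by
  rwa [← IsLocalRing.notMem_maximalIdeal, ← PadicInt.ker_toZMod, RingHom.mem_ker, map_natCast,
    ZMod.natCast_eq_zero_iff]

theorem IsUnit.exists_sq_mul_sq_eq_one {R : Type*} [CommMonoid R] {a : R} (ha : IsUnit a) :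
    ∃ x : R, a ^ 2 * x ^ 2 = 1 :=
  ⟨↑ha.unit⁻¹, by rw [← mul_pow, IsUnit.mul_val_inv, one_pow]⟩

theorem PadicInt.sq_mul_sq_add_pow_mul_sq_sub_mul_sq_ne_one_of_dvd {p : ℕ} [Fact p.Prime]
    {n m k : ℕ} (hk : 0 < k) (hpn : p ∣ n) (hpm : p ∣ m) (x y z : ℤ_[p]) :
    (m : ℤ_[p]) ^ 2 * x ^ 2 + (n : ℤ_[p]) ^ (2 * k) * y ^ 2 - (n : ℤ_[p]) * z ^ 2 ≠ 1 := by
  intro h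
  have hmod := congrArg PadicInt.toZMod h
  rw [← ZMod.natCast_eq_zero_iff] at hpn hpm
  simp [hpn, hpm, hk.ne'] at hmod

theorem stmt9_general (n m k : ℕ) (hk : 0 < k) :
    (∀ (p : ℕ) [Fact p.Prime],
        ∃ x y z : ℤ_[p],
          (m : ℤ_[p]) ^ 2 * x ^ 2 + (n : ℤ_[p]) ^ (2 * k) * y ^ 2 - (n : ℤ_[p]) * z ^ 2 = 1) ↔
      Nat.gcd n m = 1 := by
  constructor
  · intro hsol
    by_contra hgcd
    obtain ⟨p, hp, hpd⟩ := Nat.exists_prime_and_dvd hgcd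
    have : Fact p.Prime := ⟨hp⟩
    obtain ⟨x, y, z, hxyz⟩ := hsol p
    exact PadicInt.sq_mul_sq_add_pow_mul_sq_sub_mul_sq_ne_one_of_dvd hk
      (hpd.trans (Nat.gcd_dvd_left n m)) (hpd.trans (Nat.gcd_dvd_right n m)) x y z hxyz
  · intro hgcd p hp
    by_cases hpm : p ∣ m
    · have hpn : ¬p ∣ n := fun hpn => hp.out.not_dvd_one (hgcd ▸ Nat.dvd_gcd hpn hpm)
      obtain ⟨y, hy⟩ := ((PadicInt.isUnit_natCast_of_not_dvd hpn).pow k).exists_sq_mul_sq_eq_one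
      exact ⟨0, y, 0, by rw [pow_mul', hy]; ring⟩
    · obtain ⟨x, hx⟩ := (PadicInt.isUnit_natCast_of_not_dvd hpm).exists_sq_mul_sq_eq_one
      exact ⟨x, 0, 0, by rw [hx]; ring⟩

theorem stmt9 (n m k : ℕ) (hn : 0 < n) (hm : 0 < m) (hk : 0 < k) :
    (∀ (p : ℕ) [Fact p.Prime],
        ∃ x y z : ℤ_[p],
          (m : ℤ_[p]) ^ 2 * x ^ 2 + (n : ℤ_[p]) ^ (2 * k) * y ^ 2 - (n : ℤ_[p]) * z ^ 2 = 1) ↔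
      Nat.gcd n m = 1 :=
  stmt9_general n m k hk
end

section
/- Let m be an integer with m ≡ 3 (mod 8) or m ≡ 5 (mod 8) (i.e. m ≡ ±3 (mod 8)). Then: (1) for every prime p there exist x, y, z ∈ ℤ_p, not all divisible by p, with x² − 2y² + 64z² = m²; but (2) there do not exist integers x, y, z with gcd(x, y, z) = 1 and x² − 2y² + 64z² = m². -/
/-!
Locally: at `p = 2` the point `(m, 0, 0)` is primitive because `m` is odd. At odd `p` the
binary form `2y² - 64z²` represents `1 - m²` over `𝔽_p` (each of `2y²` and `1 - m² + 64z²` takes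
`(p + 1) / 2` values), so `m² + 2y² - 64z² ≡ 1 (mod p)` and Hensel's lemma gives it a square
root `x`, which is a unit.

Globally: `x² - 2y² = (m - 8z)(m + 8z)` and `m - 8z ≡ ±3 (mod 8)`, so multiplicativity of `χ₈`
yields a prime `q ≡ ±3 (mod 8)` dividing `m - 8z` to an odd power. Since `2` is not a square
mod `q`, every `x² - 2y² ≠ 0` has even `q`-adic valuation, so `q ∣ m + 8z` too. Then `q` divides
`x`, `y` and `16z`, contradicting primitivity.
-/
open Polynomial

theorem FiniteField.exists_mul_sq_add_mul_sq_eq {F : Type*} [Field F] [Fintype F]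
    (hF : Fintype.card F % 2 = 1) {a b : F} (ha : a ≠ 0) (hb : b ≠ 0) (c : F) :
    ∃ y z : F, a * y ^ 2 + b * z ^ 2 = c := by
  obtain ⟨y, z, h⟩ := FiniteField.exists_root_sum_quadratic
    (degree_quadratic (b := 0) (c := -c) ha) (degree_quadratic (b := 0) (c := 0) hb) hF
  refine ⟨y, z, ?_⟩
  simp only [eval_add, eval_mul, eval_pow, eval_C, eval_X] at h
  linear_combination h

namespace PadicInt

variable {p : ℕ} [Fact p.Prime]

theorem toZMod_eq_zero_iff_dvd {x : ℤ_[p]} : toZMod x = 0 ↔ (p : ℤ_[p]) ∣ x := by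
  rw [← RingHom.mem_ker, ker_toZMod, IsLocalRing.mem_maximalIdeal, mem_nonunits,
    norm_lt_one_iff_dvd]

theorem norm_two_eq_one (hp : p ≠ 2) : ‖(2 : ℤ_[p])‖ = 1 := by
  refine (norm_le_one _).antisymm (not_lt.mp fun h => hp ?_)
  have h2 : (p : ℤ) ∣ 2 := by exact_mod_cast (norm_int_lt_one_iff_dvd (p := p) 2).mp (by simpa)
  exact (Nat.prime_dvd_prime_iff_eq Fact.out Nat.prime_two).mp (by exact_mod_cast h2)

theorem isSquare_of_toZMod_eq_one (hp : p ≠ 2) {c : ℤ_[p]} (hc : toZMod c = 1) :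
    IsSquare c := by
  let F : ℤ_[p][X] := X ^ 2 - C c
  have hder : ‖F.derivative.aeval (1 : ℤ_[p])‖ = 1 := by
    simpa [F, derivative_X_pow, one_add_one_eq_two] using norm_two_eq_one hp
  have hval : ‖F.aeval (1 : ℤ_[p])‖ < ‖F.derivative.aeval (1 : ℤ_[p])‖ ^ 2 := by
    rw [hder, one_pow, norm_lt_one_iff_dvd, ← toZMod_eq_zero_iff_dvd]
    simp [F, hc]
  obtain ⟨x, hx, -⟩ := hensels_lemma hval
  exact ⟨x, by simpa [F, sub_eq_zero, sq, eq_comm] using hx⟩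

end PadicInt

theorem exists_padicInt_solution_of_ne_two {p : ℕ} [Fact p.Prime] (hp : p ≠ 2) (m : ℤ_[p]) :
    ∃ x y z : ℤ_[p], x ^ 2 - 2 * y ^ 2 + 64 * z ^ 2 = m ^ 2 ∧ ¬ (p : ℤ_[p]) ∣ x := by
  have hcard : Fintype.card (ZMod p) % 2 = 1 := by
    rw [ZMod.card]
    exact Nat.odd_iff.mp ((Fact.out : p.Prime).odd_of_ne_two hp)
  have h2 : (2 : ZMod p) ≠ 0 := Ring.two_ne_zero (by rwa [ZMod.ringChar_zmod_n])
  have h64 : (-64 : ZMod p) ≠ 0 := by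
    simpa [show (64 : ZMod p) = 2 ^ 6 by norm_num] using h2
  obtain ⟨y₀, z₀, hyz⟩ :=
    FiniteField.exists_mul_sq_add_mul_sq_eq hcard h2 h64 (1 - PadicInt.toZMod m ^ 2)
  obtain ⟨y, rfl⟩ := ZMod.ringHom_surjective PadicInt.toZMod y₀
  obtain ⟨z, rfl⟩ := ZMod.ringHom_surjective PadicInt.toZMod z₀
  have hc : PadicInt.toZMod (m ^ 2 + 2 * y ^ 2 - 64 * z ^ 2) = 1 := by
    simp only [map_add, map_sub, map_mul, map_pow, map_ofNat]
    linear_combination hyz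
  obtain ⟨x, hx⟩ := PadicInt.isSquare_of_toZMod_eq_one hp hc
  refine ⟨x, y, z, by linear_combination -hx, fun hdvd => ?_⟩
  rw [hx, map_mul, PadicInt.toZMod_eq_zero_iff_dvd.mpr hdvd, zero_mul] at hc
  exact zero_ne_one hc

theorem Nat.exists_mem_primeFactors_pow_factorization_ne_one {M : Type*} [CommMonoid M]
    (f : ℕ →* M) {n : ℕ} (hn : n ≠ 0) (h : f n ≠ 1) :
    ∃ q ∈ n.primeFactors, f q ^ n.factorization q ≠ 1 := by
  rw [← Nat.prod_factorization_pow_eq_self hn, map_finsuppProd] at h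
  simpa only [map_pow, Nat.support_factorization] using Finset.exists_ne_one_of_prod_ne_one h

namespace Int

theorem exists_prime_mod_eight_odd_padicValInt {a : ℤ} (ha : a % 8 = 3 ∨ a % 8 = 5) :
    ∃ q : ℕ, q.Prime ∧ (q % 8 = 3 ∨ q % 8 = 5) ∧ Odd (padicValInt q a) := by
  let f : ℕ →* ℤ := (ZMod.χ₈ : ZMod 8 →* ℤ).comp (Nat.castRingHom (ZMod 8) : ℕ →* ZMod 8)
  have hf (n : ℕ) : f n = if n % 2 = 0 then 0 else if n % 8 = 1 ∨ n % 8 = 7 then 1 else -1 :=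
    ZMod.χ₈_nat_eq_if_mod_eight n
  have hodd : a.natAbs % 2 = 1 := by omega
  obtain ⟨q, hq, hne⟩ := Nat.exists_mem_primeFactors_pow_factorization_ne_one f
    (n := a.natAbs) (by omega) (by rw [hf]; split_ifs <;> omega)
  obtain ⟨hqp, hqa, -⟩ := Nat.mem_primeFactors.mp hq
  have hq2 : q % 2 = 1 := Nat.odd_iff.mp ((Nat.odd_iff.mpr hodd).of_dvd_nat hqa)
  rw [hf, if_neg (by omega)] at hne
  split_ifs at hne with h17
  · exact absurd (one_pow _) hne
  · refine ⟨q, hqp, by omega, ?_⟩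
    rwa [Ne, neg_one_pow_eq_one_iff_even (by decide), Nat.not_even_iff_odd,
      Nat.factorization_def _ hqp] at hne

variable {q : ℕ} [Fact q.Prime] {d : ℤ}

theorem dvd_and_dvd_of_dvd_sq_sub_mul_sq (hd : ¬IsSquare (d : ZMod q)) {x y : ℤ}
    (h : (q : ℤ) ∣ x ^ 2 - d * y ^ 2) : (q : ℤ) ∣ x ∧ (q : ℤ) ∣ y := by
  simp only [← ZMod.intCast_zmod_eq_zero_iff_dvd] at h ⊢
  push_cast at h
  have hy : (y : ZMod q) = 0 := by
    by_contra hy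
    exact hd ⟨x / y, by field_simp; linear_combination -h⟩
  exact ⟨pow_eq_zero_iff two_ne_zero |>.mp (by simpa [hy] using h), hy⟩

theorem even_padicValInt_sq_sub_mul_sq (hd : ¬IsSquare (d : ZMod q)) {x y : ℤ}
    (h : x ^ 2 - d * y ^ 2 ≠ 0) : Even (padicValInt q (x ^ 2 - d * y ^ 2)) := by
  induction hk : padicValInt q (x ^ 2 - d * y ^ 2) using Nat.strong_induction_on
    generalizing x y with
  | _ k ih =>
  rcases Nat.eq_zero_or_pos k with rfl | hk0
  · exact .zero
  have hdvd : (q : ℤ) ∣ x ^ 2 - d * y ^ 2 := by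
    simpa using (padicValInt_dvd_iff 1 _).mpr (Or.inr (hk ▸ hk0))
  obtain ⟨⟨x', rfl⟩, ⟨y', rfl⟩⟩ := dvd_and_dvd_of_dvd_sq_sub_mul_sq hd hdvd
  have hfac : (q * x') ^ 2 - d * (q * y') ^ 2 = (x' ^ 2 - d * y' ^ 2) * q * q := by ring
  have h' : x' ^ 2 - d * y' ^ 2 ≠ 0 := fun h0 => h (by simp [hfac, h0])
  have hval : k = padicValInt q (x' ^ 2 - d * y' ^ 2) + 2 := by
    rw [← hk, hfac, padicValInt_mul_eq_succ _ (mul_ne_zero h' (by simpa using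
      (Fact.out : q.Prime).ne_zero)), padicValInt_mul_eq_succ _ h']
  rw [hval]
  exact (ih _ (by omega) h' rfl).add even_two

end Int

theorem not_exists_primitive_solution {m : ℤ} (hm : m % 8 = 3 ∨ m % 8 = 5) :
    ¬ ∃ x y z : ℤ, Int.gcd (Int.gcd x y : ℤ) z = 1 ∧ x ^ 2 - 2 * y ^ 2 + 64 * z ^ 2 = m ^ 2 := by
  rintro ⟨x, y, z, hgcd, h⟩
  have hfac : x ^ 2 - 2 * y ^ 2 = (m - 8 * z) * (m + 8 * z) := by linear_combination h
  have ha : m - 8 * z ≠ 0 := by omega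
  have hb : m + 8 * z ≠ 0 := by omega
  obtain ⟨q, hq, hq8, hodd⟩ :=
    Int.exists_prime_mod_eight_odd_padicValInt (a := m - 8 * z) (by omega)
  have := Fact.mk hq
  have hsq : ¬IsSquare ((2 : ℤ) : ZMod q) := by
    rw [Int.cast_ofNat, FiniteField.isSquare_two_iff, ZMod.card]
    omega
  have heven := Int.even_padicValInt_sq_sub_mul_sq hsq (hfac ▸ mul_ne_zero ha hb)
  rw [hfac, padicValInt.mul ha hb] at heven
  have hdvd {c : ℤ} (hc : Odd (padicValInt q c)) : (q : ℤ) ∣ c := by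
    by_contra hndvd
    rw [padicValInt.eq_zero_of_not_dvd hndvd] at hc
    exact Nat.not_odd_zero hc
  have hqa := hdvd hodd
  have hqb : (q : ℤ) ∣ m + 8 * z := by
    refine hdvd ?_
    rwa [← Nat.not_even_iff_odd, ← Nat.even_add.mp heven, Nat.not_even_iff_odd]
  obtain ⟨hqx, hqy⟩ :=
    Int.dvd_and_dvd_of_dvd_sq_sub_mul_sq hsq (hfac ▸ dvd_mul_of_dvd_left hqa _)
  have hq16 : IsCoprime (q : ℤ) 16 := by
    rw [show (16 : ℤ) = ((2 ^ 4 : ℕ) : ℤ) by norm_num, Nat.isCoprime_iff_coprime]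
    exact ((Nat.coprime_primes hq Nat.prime_two).mpr (by omega)).pow_right 4
  have hqz : (q : ℤ) ∣ z :=
    hq16.dvd_of_dvd_mul_left (by convert dvd_sub hqb hqa using 1; ring)
  have hq1 := Int.dvd_coe_gcd (Int.dvd_coe_gcd hqx hqy) hqz
  rw [hgcd] at hq1
  exact hq.not_dvd_one (by exact_mod_cast hq1)

theorem stmt10 (m : ℤ) (hm : m % 8 = 3 ∨ m % 8 = 5) :
    (∀ (p : ℕ) [Fact p.Prime],
      ∃ x y z : ℤ_[p],
        x ^ 2 - 2 * y ^ 2 + 64 * z ^ 2 = (m : ℤ_[p]) ^ 2 ∧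
          ¬ ((p : ℤ_[p]) ∣ x ∧ (p : ℤ_[p]) ∣ y ∧ (p : ℤ_[p]) ∣ z)) ∧
    ¬ ∃ x y z : ℤ, Int.gcd (Int.gcd x y : ℤ) z = 1 ∧
        x ^ 2 - 2 * y ^ 2 + 64 * z ^ 2 = m ^ 2 := by
  refine ⟨fun p _ => ?_, not_exists_primitive_solution hm⟩
  rcases eq_or_ne p 2 with rfl | hp
  · refine ⟨m, 0, 0, by ring, fun hdvd => ?_⟩
    have h2m := hdvd.1
    rw [← PadicInt.toZMod_eq_zero_iff_dvd, map_intCast, ZMod.intCast_zmod_eq_zero_iff_dvd] at h2m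
    omega
  · obtain ⟨x, y, z, h, hx⟩ := exists_padicInt_solution_of_ne_two hp (m : ℤ_[p])
    exact ⟨x, y, z, h, fun hdvd => hx hdvd.1⟩
end

section
/- Consider the binary quadratic form g(x, y) = x² + 32y² and the ternary quadratic form h(x, y, z) = x² + 128y² + 128yz + 544z². Then: (1) for every prime p, g is represented by h over ℤ_p, i.e. there exist linear forms l₁, l₂, l₃ in x, y with coefficients in ℤ_p such that x² + 32y² = h(l₁(x,y), l₂(x,y), l₃(x,y)) holds identically; but (2) g is not represented by h over ℤ: no such linear forms with integer coefficients exist. -/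
/-!
Completing the square, `h(X,Y,Z) = X² + 32 q(Y,Z)` with `q(Y,Z) = (2Y+Z)² + 16Z²`, so `g` is
represented as soon as `q` represents `1`. Over `ℤ_p` with `p` odd take `(Y,Z) = (1/2, 0)`; over
`ℤ₂` take `Z = 1`, which asks for an odd square root of `-15 ≡ 1 mod 16`, provided by Hensel's
lemma. Over `ℤ` the form is positive definite: evaluating at `(1,0)` forces `l₁ = ±x + b₁y` and
`l₂, l₃` to be multiples of `y`, the cross term then kills `b₁`, and `q` would have to represent `1`
over `ℤ`, which it does not since `16Z² ≤ 1` forces `Z = 0` and `4Y² ≠ 1`.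
-/

/-- The binary form `x² + 32y²` is represented over `R` by the ternary form
`h(X,Y,Z) = X² + 128Y² + 128YZ + 544Z²`: there are linear forms
`lᵢ(x,y) = aᵢx + bᵢy` with coefficients in `R` such that
`x² + 32y² = h(l₁(x,y), l₂(x,y), l₃(x,y))` identically. -/
def RepsBinaryByH (R : Type*) [CommRing R] : Prop :=
  ∃ a₁ b₁ a₂ b₂ a₃ b₃ : R, ∀ x y : R,
    x ^ 2 + 32 * y ^ 2 =
      (a₁ * x + b₁ * y) ^ 2 + 128 * (a₂ * x + b₂ * y) ^ 2 +
        128 * (a₂ * x + b₂ * y) * (a₃ * x + b₃ * y) + 544 * (a₃ * x + b₃ * y) ^ 2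

theorem repsBinaryByH_of_sq_add_sixteen_sq_eq_one {R : Type*} [CommRing R] {y z : R}
    (h : (2 * y + z) ^ 2 + 16 * z ^ 2 = 1) : RepsBinaryByH R :=
  ⟨1, 0, 0, y, 0, z, fun x t => by linear_combination (-32 * t ^ 2) * h⟩

namespace PadicInt

theorem isUnit_natCast_of_not_dvd_s14 {p : ℕ} [Fact p.Prime] {n : ℕ} (h : ¬p ∣ n) :
    IsUnit (n : ℤ_[p]) := by
  rw [isUnit_iff]
  refine (norm_le_one _).eq_or_lt.resolve_right fun hlt => h ?_
  rw [← Int.cast_natCast, norm_int_lt_one_iff_dvd] at hlt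
  exact_mod_cast hlt

theorem exists_odd_sq_eq_of_eight_dvd_sub_one {a : ℤ_[2]} (ha : (8 : ℤ_[2]) ∣ a - 1) :
    ∃ w : ℤ_[2], (2 * w + 1) ^ 2 = a := by
  obtain ⟨c, hc⟩ := ha
  have h2 : ‖(2 : ℤ_[2])‖ = 2⁻¹ := by simpa using norm_p (p := 2)
  have hnorm : ‖(Polynomial.X ^ 2 - Polynomial.C a).aeval (1 : ℤ_[2])‖ <
      ‖(Polynomial.X ^ 2 - Polynomial.C a).derivative.aeval (1 : ℤ_[2])‖ ^ 2 := by
    have h8 : (1 : ℤ_[2]) - a = 2 ^ 3 * -c := by linear_combination -hc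
    simp only [Polynomial.aeval_sub, Polynomial.aeval_X_pow, Polynomial.aeval_C,
      Polynomial.derivative_sub, Polynomial.derivative_X_pow, Polynomial.derivative_C,
      Polynomial.aeval_mul, one_pow, sub_zero, Algebra.algebraMap_self, RingHom.id_apply,
      map_natCast]
    rw [Nat.cast_ofNat, mul_one, h8, norm_mul, norm_pow, norm_neg, h2]
    calc (2⁻¹ : ℝ) ^ 3 * ‖c‖ ≤ 2⁻¹ ^ 3 := mul_le_of_le_one_right (by positivity) (norm_le_one c)
      _ < 2⁻¹ ^ 2 := by norm_num
  obtain ⟨z, hz, hdist, -⟩ := hensels_lemma hnorm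
  obtain ⟨w, hw⟩ := (norm_lt_one_iff_dvd _).mp (hdist.trans_le (norm_le_one _))
  refine ⟨w, ?_⟩
  simp only [Polynomial.aeval_sub, Polynomial.aeval_X_pow, Polynomial.aeval_C,
    Algebra.algebraMap_self, RingHom.id_apply] at hz
  push_cast at hw
  linear_combination hz - (z + 2 * w + 1) * hw

end PadicInt

theorem Int.sq_add_sixteen_sq_ne_one (y z : ℤ) : (2 * y + z) ^ 2 + 16 * z ^ 2 ≠ 1 := by
  intro h
  obtain rfl : z = 0 := by nlinarith [sq_nonneg (2 * y + z)]
  have : (2 : ℤ) ∣ 1 := ⟨2 * y ^ 2, by linear_combination -h⟩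
  norm_num at this

theorem not_repsBinaryByH_int : ¬RepsBinaryByH ℤ := by
  rintro ⟨a₁, b₁, a₂, b₂, a₃, b₃, h⟩
  have h10 : a₁ ^ 2 + 32 * ((2 * a₂ + a₃) ^ 2 + 16 * a₃ ^ 2) = 1 := by
    linear_combination -h 1 0
  obtain rfl : a₃ = 0 := by nlinarith [sq_nonneg a₁, sq_nonneg (2 * a₂ + a₃)]
  obtain rfl : a₂ = 0 := by nlinarith [sq_nonneg a₁]
  have ha₁ : a₁ ^ 2 = 1 := by linear_combination h10
  obtain rfl : b₁ = 0 := by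
    have hcross : 4 * a₁ * b₁ = 0 := by linear_combination h 1 (-1) - h 1 1
    have ha₁_ne : a₁ ≠ 0 := by rintro rfl; norm_num at ha₁
    simpa [ha₁_ne] using hcross
  have h01 : 32 * ((2 * b₂ + b₃) ^ 2 + 16 * b₃ ^ 2) = 32 * 1 := by linear_combination -h 0 1
  exact Int.sq_add_sixteen_sq_ne_one b₂ b₃ (mul_left_cancel₀ (by norm_num) h01)

theorem stmt14 :
    (∀ (p : ℕ) [Fact p.Prime], RepsBinaryByH ℤ_[p]) ∧ ¬ RepsBinaryByH ℤ := by
  refine ⟨fun p _ => ?_, not_repsBinaryByH_int⟩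
  by_cases hp : p = 2
  · subst hp
    obtain ⟨w, hw⟩ :=
      PadicInt.exists_odd_sq_eq_of_eight_dvd_sub_one (a := -15) ⟨-2, by norm_num⟩
    exact repsBinaryByH_of_sq_add_sixteen_sq_eq_one (y := w) (z := 1) (by linear_combination hw)
  · have h2 : IsUnit ((2 : ℕ) : ℤ_[p]) := PadicInt.isUnit_natCast_of_not_dvd_s14 fun h =>
      hp ((Nat.prime_dvd_prime_iff_eq Fact.out Nat.prime_two).mp h)
    obtain ⟨u, hu⟩ := isUnit_iff_exists_inv.mp h2
    push_cast at hu
    exact repsBinaryByH_of_sq_add_sixteen_sq_eq_one (y := u) (z := 0)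
      (by linear_combination (2 * u + 1) * hu)
end

section
/- Let d be a negative squarefree integer and K = ℚ(√d), with ring of integers O_K. Let a ∈ O_K be nonzero. Then there exist a squarefree integer d₀ and an element α ∈ K with a = d₀·α² if and only if the norm N_{K/ℚ}(a) is the square of an integer. -/
/-!
In a quadratic extension every `z` satisfies `z² - t z + n = 0`, where `t` and `n` are its trace
and norm (Cayley–Hamilton for multiplication by `z`). If `n = ε²` this says
`(z + e)² = (t + 2e) z` for `e = ±ε`, and one of the signs makes `t + 2e` nonzero unless `z = 0`;
so `z` is a rational multiple of a square, and the square part of that rational can be moved into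
the square. Conversely `N(d₀ α²) = (d₀ N(α))²`, and an integer that is a square in `ℚ` is a
square in `ℤ`.
-/

open scoped NumberField

theorem Int.exists_squarefree_mul_sq (n : ℤ) :
    ∃ d₀ m : ℤ, Squarefree d₀ ∧ n = d₀ * m ^ 2 := by
  obtain ⟨u, v, huv, hu⟩ := Nat.sq_mul_squarefree n.natAbs
  rcases Int.natAbs_eq n with h | h <;> rw [h, ← huv]
  · exact ⟨u, v, Int.squarefree_natCast.2 hu, by push_cast; ring⟩
  · refine ⟨-u, v, ?_, by push_cast; ring⟩
    rwa [← Int.squarefree_natAbs, Int.natAbs_neg, Int.natAbs_natCast]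

theorem Rat.exists_squarefree_mul_sq (q : ℚ) :
    ∃ (d₀ : ℤ) (m : ℚ), Squarefree d₀ ∧ q = d₀ * m ^ 2 := by
  obtain ⟨d₀, m, hd₀, hm⟩ := Int.exists_squarefree_mul_sq (q.num * q.den)
  refine ⟨d₀, m / q.den, hd₀, ?_⟩
  have hq : q * q.den ^ 2 = q.num * q.den := by
    rw [sq, ← mul_assoc, Rat.mul_den_eq_num]
  rw [div_pow, ← mul_div_assoc, eq_div_iff (by positivity), hq]
  exact_mod_cast hm

theorem Algebra.sq_sub_trace_mul_add_norm_eq_zero {R S : Type*} [CommRing R] [Nontrivial R]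
    [CommRing S] [Algebra R S] (b : Module.Basis (Fin 2) R S) (z : S) :
    z ^ 2 - algebraMap R S (trace R S z) * z + algebraMap R S (norm R z) = 0 := by
  have h := Matrix.aeval_self_charpoly (leftMulMatrix b z)
  rw [Polynomial.aeval_algHom_apply, Matrix.charpoly_fin_two, ← trace_eq_matrix_trace,
    ← norm_eq_matrix_det, ← map_zero (leftMulMatrix b)] at h
  simpa [Algebra.smul_def] using leftMulMatrix_injective b h

theorem eq_mul_sq_of_sq_sub_mul_add_sq_eq_zero {L : Type*} [Field L] {z t e : L}
    (h : z ^ 2 - t * z + e ^ 2 = 0) (hte : t + 2 * e ≠ 0) :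
    z = (t + 2 * e) * ((z + e) / (t + 2 * e)) ^ 2 := by
  rw [div_pow, mul_div_assoc', eq_div_iff (pow_ne_zero 2 hte)]
  linear_combination -(t + 2 * e) * h

section QuadraticAlgebra

variable {F L : Type*} [Field F] [Field L] [Algebra F L] (b : Module.Basis (Fin 2) F L)
include b

theorem Algebra.isSquare_norm_algebraMap_mul_sq (c : F) (α : L) :
    IsSquare (Algebra.norm F (algebraMap F L c * α ^ 2)) := by
  rw [map_mul, map_pow, Algebra.norm_algebraMap_of_basis b, Fintype.card_fin]
  exact ⟨c * Algebra.norm F α, by ring⟩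

theorem Algebra.exists_eq_algebraMap_mul_sq_of_isSquare_norm [NeZero (2 : F)] {z : L}
    (hz : IsSquare (Algebra.norm F z)) : ∃ (c : F) (β : L), z = algebraMap F L c * β ^ 2 := by
  obtain ⟨ε, hε⟩ := hz
  have hrel := Algebra.sq_sub_trace_mul_add_norm_eq_zero b z
  set t := Algebra.trace F L z
  have hsq (e : F) (he : e ^ 2 = ε * ε) (hte : t + 2 * e ≠ 0) :
      ∃ (c : F) (β : L), z = algebraMap F L c * β ^ 2 := by
    rw [hε, ← he, map_pow] at hrel
    have hte' : algebraMap F L (t + 2 * e) ≠ 0 := (map_ne_zero _).2 hte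
    rw [map_add, map_mul, map_ofNat] at hte'
    refine ⟨t + 2 * e, (z + algebraMap F L e) / (algebraMap F L t + 2 * algebraMap F L e), ?_⟩
    rw [map_add, map_mul, map_ofNat]
    exact eq_mul_sq_of_sq_sub_mul_add_sq_eq_zero hrel hte'
  by_cases hp : t + 2 * ε = 0
  · by_cases hm : t + 2 * -ε = 0
    · have hε0 : ε = 0 := by
        have : (2 : F) * (2 * ε) = 0 := by linear_combination hp - hm
        simpa [two_ne_zero] using this
      have ht0 : t = 0 := by linear_combination hp - 2 * hε0
      rw [hε, ht0, hε0] at hrel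
      exact ⟨1, 0, by simpa using hrel⟩
    · exact hsq (-ε) (by ring) hm
  · exact hsq ε (by ring) hp

end QuadraticAlgebra

theorem exists_squarefree_mul_sq_iff_isSquare_norm {K : Type*} [Field K] [Algebra ℚ K]
    (b : Module.Basis (Fin 2) ℚ K) (z : K) :
    (∃ (d₀ : ℤ) (α : K), Squarefree d₀ ∧ z = d₀ * α ^ 2) ↔ IsSquare (Algebra.norm ℚ z) := by
  constructor
  · rintro ⟨d₀, α, -, rfl⟩
    simpa using Algebra.isSquare_norm_algebraMap_mul_sq b (d₀ : ℚ) α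
  · intro hz
    obtain ⟨c, β, rfl⟩ := Algebra.exists_eq_algebraMap_mul_sq_of_isSquare_norm b hz
    obtain ⟨d₀, m, hd₀, rfl⟩ := Rat.exists_squarefree_mul_sq c
    exact ⟨d₀, m * β, hd₀, by rw [map_mul, map_pow, map_intCast, eq_ratCast]; ring⟩

theorem stmt17_general (K : Type*) [Field K] [NumberField K] (hdeg : Module.finrank ℚ K = 2) (a : 𝓞 K) :
    (∃ (d₀ : ℤ) (α : K), Squarefree d₀ ∧ (a : K) = (d₀ : K) * α ^ 2) ↔
      ∃ r : ℤ, Algebra.norm ℤ a = r ^ 2 := by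
  rw [exists_squarefree_mul_sq_iff_isSquare_norm (Module.finBasisOfFinrankEq ℚ K hdeg),
    ← Algebra.coe_norm_int, Rat.isSquare_intCast_iff, isSquare_iff_exists_sq]

theorem stmt17 (d : ℤ) (hd : d < 0) (hsf : Squarefree d)
    (K : Type*) [Field K] [NumberField K] (hdeg : Module.finrank ℚ K = 2)
    (s : K) (hs : s ^ 2 = (d : K))
    (a : 𝓞 K) (ha : a ≠ 0) :
    (∃ (d₀ : ℤ) (α : K), Squarefree d₀ ∧ (a : K) = (d₀ : K) * α ^ 2) ↔
      ∃ r : ℤ, Algebra.norm ℤ a = r ^ 2 :=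
  stmt17_general K hdeg a
end
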